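/- Let q be a prime power and α ∈ F_{q²} \ F_q. Define Frobenius maps on n×n matrices over the algebraic closure k of F_q by F(g) = J_n·F_q(g⁻¹)ᵀ·J_n for g ∈ GL_n(k) (where F_q raises each entry to the q-th power) and F'(x) = J_n·F_q(x)ᵀ·J_n for x ∈ Mat_n(k). Then the map s(g) = (g-1)(α - α^q g)⁻¹ on unipotent elements satisfies s(F(g)) = F'(s(g)) for every unipotent g ∈ GL_n(k). -/

import Mathlib

/-!
Put `h = F' g`. Since `F'` is a ring anti-endomorphism, `F g = F' (g⁻¹) = h⁻¹`. Factoring `h⁻¹` out of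
the denominator gives `s (h⁻¹) = (h - 1) (α ^ q - α h)⁻¹`, while `F'` reverses products and, because
`α ^ (q ^ 2) = α`, exchanges `α` and `α ^ q`, so `F' (s g) = (α ^ q - α h)⁻¹ (h - 1)`. Both factors are
polynomials in `h`, so they commute. Unipotence of `g` and `α ^ q ≠ α` make `g` and `α - α ^ q g`
invertible.
-/

open Matrix

open scoped Ring

theorem Commute.ringInverse_right {M₀ : Type*} [MonoidWithZero M₀] {a b : M₀}
    (h : Commute a b) : Commute a b⁻¹ʳ := by
  by_cases hb : IsUnit b
  · obtain ⟨u, rfl⟩ := hb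
    rw [Ring.inverse_unit]
    exact h.units_inv_right
  · rw [Ring.inverse_non_unit b hb]
    exact Commute.zero_right a

theorem MulOpposite.unop_map_ringInverse {M N F : Type*} [MonoidWithZero M] [MonoidWithZero N]
    [FunLike F M Nᵐᵒᵖ] [MonoidHomClass F M Nᵐᵒᵖ] (f : F) {x : M} (hx : IsUnit x) :
    (f x⁻¹ʳ).unop = (f x).unop⁻¹ʳ := by
  obtain ⟨u, rfl⟩ := hx
  have hinv : (f u).unop * (f ↑u⁻¹).unop = 1 := by
    rw [← MulOpposite.unop_mul, ← map_mul, Units.inv_mul, map_one, MulOpposite.unop_one]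
  have hinv' : (f ↑u⁻¹).unop * (f u).unop = 1 := by
    rw [← MulOpposite.unop_mul, ← map_mul, Units.mul_inv, map_one, MulOpposite.unop_one]
  rw [Ring.inverse_unit, Ring.inverse_unit ⟨_, _, hinv, hinv'⟩]
  rfl

theorem Ring.inverse_neg {R : Type*} [Ring R] (x : R) : (-x)⁻¹ʳ = -x⁻¹ʳ := by
  by_cases hx : IsUnit x
  · obtain ⟨u, rfl⟩ := hx
    rw [← Units.val_neg, Ring.inverse_unit, Ring.inverse_unit, _root_.inv_neg, Units.val_neg]
  · rw [Ring.inverse_non_unit x hx, Ring.inverse_non_unit (-x) (IsUnit.neg_iff x |>.not.mpr hx),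
      neg_zero]

theorem isUnit_smul_one_sub_smul_of_isNilpotent_sub_one {k A : Type*} [Field k] [Ring A]
    [Algebra k A] {g : A} (hg : IsNilpotent (g - 1)) {a b : k} (hab : a ≠ b) :
    IsUnit (a • 1 - b • g) := by
  have hscalar : IsUnit (algebraMap k A (a - b)) := (sub_ne_zero.mpr hab).isUnit.map _
  have hdecomp : a • 1 - b • g = algebraMap k A (a - b) + (-b) • (g - 1) := by
    rw [Algebra.algebraMap_eq_smul_one]
    module
  rw [hdecomp]
  exact (hg.smul _).isUnit_add_left_of_commute hscalar (Algebra.commutes _ _).symm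

section Springer

variable {k A : Type*} [CommRing k] [Ring A] [Algebra k A]

noncomputable def springerMap (a b : k) (g : A) : A := (g - 1) * (a • 1 - b • g)⁻¹ʳ

theorem springerMap_ringInverse (a b : k) {u : A} (hu : IsUnit u) :
    springerMap a b u⁻¹ʳ = springerMap b a u := by
  have hfactor : a • 1 - b • u⁻¹ʳ = -(b • 1 - a • u) * u⁻¹ʳ := by
    rw [neg_mul, sub_mul, smul_mul_assoc, smul_mul_assoc, one_mul, Ring.mul_inverse_cancel u hu]
    module
  have hcancel : (u⁻¹ʳ - 1) * u = -(u - 1) := by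
    rw [sub_mul, Ring.inverse_mul_cancel u hu, one_mul, neg_sub]
  rw [springerMap, springerMap, hfactor, Ring.inverse_mul (Or.inr hu.ringInverse),
    Ring.inverse_inverse hu, Ring.inverse_neg, ← mul_assoc, hcancel, neg_mul_neg]

theorem springerMap_map_ringInverse (f : A →+* Aᵐᵒᵖ) (φ : k → k)
    (hf : ∀ (c : k) (x : A), (f (c • x)).unop = φ c • (f x).unop)
    {a b : k} (hφa : φ a = b) (hφb : φ b = a) {g : A} (hg : IsUnit g)
    (hab : IsUnit (a • 1 - b • g)) :
    springerMap a b (f g⁻¹ʳ).unop = (f (springerMap a b g)).unop := by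
  set h := (f g).unop
  have hden : (f (a • 1 - b • g)).unop = b • 1 - a • h := by
    rw [map_sub, MulOpposite.unop_sub, hf, hf, map_one, MulOpposite.unop_one, hφa, hφb]
  have hcomm : Commute (h - 1) (b • 1 - a • h)⁻¹ʳ := by
    refine Commute.ringInverse_right ?_
    exact ((Commute.one_right _).smul_right b).sub_right
      (((Commute.refl h).sub_left (Commute.one_left h)).smul_right a)
  rw [MulOpposite.unop_map_ringInverse f hg, springerMap_ringInverse a b (hg.map f).unop,
    springerMap, springerMap, map_mul, MulOpposite.unop_mul,
    MulOpposite.unop_map_ringInverse f hab, hden, map_sub, map_one, MulOpposite.unop_sub,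
    MulOpposite.unop_one]
  exact hcomm.eq

end Springer

namespace Matrix

variable {n R : Type*} [Fintype n] [DecidableEq n] [CommRing R]

def twistedTranspose (φ : R →+* R) (J : Matrix n n R) (hJ : J * J = 1) :
    Matrix n n R →+* (Matrix n n R)ᵐᵒᵖ where
  toFun x := MulOpposite.op (J * (x.map φ)ᵀ * J)
  map_one' := by
    rw [Matrix.map_one _ φ.map_zero φ.map_one, transpose_one, Matrix.mul_one, hJ,
      MulOpposite.op_one]
  map_mul' x y := by
    rw [← MulOpposite.op_mul, Matrix.map_mul, transpose_mul]
    congr 1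
    simp only [Matrix.mul_assoc]
    rw [← Matrix.mul_assoc J J, hJ, Matrix.one_mul]
  map_zero' := by simp
  map_add' x y := by
    rw [← MulOpposite.op_add, Matrix.map_add _ φ.map_add, transpose_add, Matrix.mul_add,
      Matrix.add_mul]

theorem unop_twistedTranspose (φ : R →+* R) (J : Matrix n n R) (hJ : J * J = 1)
    (x : Matrix n n R) : (twistedTranspose φ J hJ x).unop = J * (x.map φ)ᵀ * J := rfl

theorem unop_twistedTranspose_smul (φ : R →+* R) (J : Matrix n n R) (hJ : J * J = 1)
    (c : R) (x : Matrix n n R) :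
    (twistedTranspose φ J hJ (c • x)).unop = φ c • (twistedTranspose φ J hJ x).unop := by
  rw [unop_twistedTranspose, unop_twistedTranspose, Matrix.map_smul' _ _ _ φ.map_mul,
    transpose_smul, Matrix.mul_smul, Matrix.smul_mul]

end Matrix

theorem Matrix.mul_self_eq_one_of_antidiagonal {R : Type*} [Semiring R] {n : ℕ}
    {J : Matrix (Fin n) (Fin n) R}
    (hJ : ∀ i j : Fin n, J i j = if (i : ℕ) + 1 + ((j : ℕ) + 1) = n + 1 then 1 else 0) :
    J * J = 1 := by
  have hrev : ∀ i j : Fin n, J i j = if j = i.rev then 1 else 0 := fun i j => by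
    rw [hJ]
    refine if_congr ?_ rfl rfl
    rw [Fin.ext_iff, Fin.val_rev]
    omega
  ext i j
  simp only [mul_apply, hrev, one_apply, ite_mul, one_mul, zero_mul, Finset.sum_ite_eq',
    Finset.mem_univ, if_true, Fin.rev_rev, eq_comm]

theorem stmt9_general (p : ℕ) [Fact p.Prime] (m : ℕ)
    (k : Type*) [Field k] [CharP k p]
    (q : ℕ) (hq : q = p ^ m)
    (α : k) (hα2 : α ^ q ^ 2 = α) (hα : α ^ q ≠ α) (n : ℕ)
    (J : Matrix (Fin n) (Fin n) k)
    (hJ : ∀ i j : Fin n, J i j = if (i : ℕ) + 1 + ((j : ℕ) + 1) = n + 1 then 1 else 0)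
    (F : Matrix (Fin n) (Fin n) k → Matrix (Fin n) (Fin n) k)
    (hF : ∀ g, F g = J * ((Ring.inverse g).map (fun a => a ^ q))ᵀ * J)
    (F' : Matrix (Fin n) (Fin n) k → Matrix (Fin n) (Fin n) k)
    (hF' : ∀ x, F' x = J * (x.map (fun a => a ^ q))ᵀ * J)
    (s : Matrix (Fin n) (Fin n) k → Matrix (Fin n) (Fin n) k)
    (hs : ∀ g, s g = (g - 1) *
      Ring.inverse (α • (1 : Matrix (Fin n) (Fin n) k) - α ^ q • g)) :
    ∀ g : Matrix (Fin n) (Fin n) k, (g - 1) ^ n = 0 → s (F g) = F' (s g) := by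
  intro g hg
  subst hq
  set T := twistedTranspose (iterateFrobenius k p m) J (mul_self_eq_one_of_antidiagonal hJ)
  have hFT : F g = (T g⁻¹ʳ).unop := hF g
  have hF'T : ∀ x, F' x = (T x).unop := hF'
  have hunip : IsNilpotent (g - 1) := ⟨n, hg⟩
  have hgu : IsUnit g := by simpa using hunip.isUnit_add_one
  have hφα : iterateFrobenius k p m (α ^ p ^ m) = α := by
    rw [iterateFrobenius_def, ← pow_mul, ← sq, hα2]
  rw [funext hs, hFT, hF'T]
  exact springerMap_map_ringInverse T _ (unop_twistedTranspose_smul _ J _)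
    (iterateFrobenius_def p m α) hφα hgu
    (isUnit_smul_one_sub_smul_of_isNilpotent_sub_one hunip hα.symm)

/-- the Springer morphism s(g) = (g-1)(α - α^q g)⁻¹ intertwines the unitary
Frobenius F(g) = Jₙ F_q(g⁻¹)ᵀ Jₙ on the group with F'(x) = Jₙ F_q(x)ᵀ Jₙ on the Lie
algebra: s(F(g)) = F'(s(g)) for every unipotent g. -/
theorem stmt9 (p : ℕ) [Fact p.Prime] (m : ℕ) (hm : 0 < m)
    (k : Type*) [Field k] [IsAlgClosed k] [CharP k p]
    (q : ℕ) (hq : q = p ^ m)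
    (α : k) (hα2 : α ^ q ^ 2 = α) (hα : α ^ q ≠ α) (n : ℕ)
    (J : Matrix (Fin n) (Fin n) k)
    (hJ : ∀ i j : Fin n, J i j = if (i : ℕ) + 1 + ((j : ℕ) + 1) = n + 1 then 1 else 0)
    (F : Matrix (Fin n) (Fin n) k → Matrix (Fin n) (Fin n) k)
    (hF : ∀ g, F g = J * ((Ring.inverse g).map (fun a => a ^ q))ᵀ * J)
    (F' : Matrix (Fin n) (Fin n) k → Matrix (Fin n) (Fin n) k)
    (hF' : ∀ x, F' x = J * (x.map (fun a => a ^ q))ᵀ * J)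
    (s : Matrix (Fin n) (Fin n) k → Matrix (Fin n) (Fin n) k)
    (hs : ∀ g, s g = (g - 1) *
      Ring.inverse (α • (1 : Matrix (Fin n) (Fin n) k) - α ^ q • g)) :
    ∀ g : Matrix (Fin n) (Fin n) k, (g - 1) ^ n = 0 → s (F g) = F' (s g) :=
  stmt9_general p m k q hq α hα2 hα n J hJ F hF F' hF' s hs
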